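/- For every integer n ≥ 1, the denominator DB_n of the n-th Bernoulli polynomial B_n(x) splits into the triple product DB_n = D̂_{n+1} · D̃_{n+1} · Ď_{n+1}. -/

import Mathlib

/-- A rational polynomial has only integral coefficients. -/
def IsIntPoly (f : Polynomial ℚ) : Prop := ∀ i, (f.coeff i).den = 1

/-- The least positive integer `d` such that `d • f` has only integral coefficients. -/
noncomputable def polyDenom (f : Polynomial ℚ) : ℕ :=
  sInf {d : ℕ | 0 < d ∧ IsIntPoly ((d : ℚ) • f)}

/-- Sum of base-`p` digits of `n`. -/
def sd (p n : ℕ) : ℕ := (Nat.digits p n).sum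

/-- Radical (squarefree kernel) of `n`. -/
def rad (n : ℕ) : ℕ := ∏ p ∈ n.primeFactors, p

/-- `D n = denom (B_n(x) - B_n)`. -/
noncomputable def D (n : ℕ) : ℕ :=
  polyDenom (Polynomial.bernoulli n - Polynomial.C (bernoulli n))

/-- `DB n = denom (B_n(x))`. -/
noncomputable def DB (n : ℕ) : ℕ := polyDenom (Polynomial.bernoulli n)

/-- `D̂ n`: product of primes `p` with `p ∤ n` and `s_p(n) ≥ p`.
(Any such prime satisfies `p ≤ s_p(n) ≤ n`.) -/
def Dhat (n : ℕ) : ℕ :=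
  ∏ p ∈ (Finset.range (n + 1)).filter (fun p => p.Prime ∧ ¬ p ∣ n ∧ p ≤ sd p n), p

/-- `D̃ n`: product of primes `p` with `p ∣ n` and `s_p(n) ≥ p`. -/
def Dtilde (n : ℕ) : ℕ :=
  ∏ p ∈ (Finset.range (n + 1)).filter (fun p => p.Prime ∧ p ∣ n ∧ p ≤ sd p n), p

/-- `Ď n`: product of primes `p` with `p ∣ n` and `s_p(n) < p`. -/
def Dcheck (n : ℕ) : ℕ :=
  ∏ p ∈ (Finset.range (n + 1)).filter (fun p => p.Prime ∧ p ∣ n ∧ sd p n < p), p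

/-- `D⁺ n`: product of primes `p` with `p > √n` and `s_p(n) ≥ p`. -/
def Dplus (n : ℕ) : ℕ :=
  ∏ p ∈ (Finset.range (n + 1)).filter (fun p => p.Prime ∧ n < p ^ 2 ∧ p ≤ sd p n), p

/-- The sum-of-powers polynomial `S_n(x) = (B_{n+1}(x) - B_{n+1}) / (n+1)`. -/
noncomputable def Spoly (n : ℕ) : Polynomial ℚ :=
  Polynomial.C (((n : ℚ) + 1)⁻¹) *
    (Polynomial.bernoulli (n + 1) - Polynomial.C (bernoulli (n + 1)))

/-!
By von Staudt–Clausen, `B_{2k} + ∑_{(q-1) ∣ 2k} 1/q` is an integer, so the denominator of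
every Bernoulli number is squarefree, and a prime `p` divides it exactly when the index `m` is
`1` or even and positive with `(p - 1) ∣ m`. The coefficient of `x^(n-i)` in `B_n(x)` is
`C(n,i) B_i`, so `DB_n` is squarefree and `p ∣ DB_n` iff some such `i ≤ n` has `p ∤ C(n,i)`.
By Kummer, `p ∤ C(n,i)` means that the base-`p` digits of `i` lie below those of `n`; since
`s_p(i) ≡ i [MOD p - 1]`, such an `i` exists iff `s_p(n) ≥ p - 1`, i.e. iff `p ∣ n + 1` or
`s_p(n + 1) ≥ p`. These are exactly the primes dividing `D̂_{n+1} D̃_{n+1} Ď_{n+1}`.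
-/

open Finset

lemma Rat.den_natCast_mul_eq_one_iff (d : ℕ) (q : ℚ) :
    ((d : ℚ) * q).den = 1 ↔ q.den ∣ d := by
  constructor
  · intro h
    rcases eq_or_ne d 0 with rfl | hd
    · exact dvd_zero _
    have hq : q = Rat.divInt ((d : ℚ) * q).num d := by
      rw [Rat.divInt_eq_div, Rat.coe_int_num_of_den_eq_one h]
      push_cast
      field_simp
    rw [hq]
    exact Int.natCast_dvd_natCast.1 (Rat.den_dvd _ _)
  · rintro ⟨e, rfl⟩
    rw [Nat.cast_mul, mul_comm, ← mul_assoc, Rat.mul_den_eq_num]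
    exact_mod_cast Rat.den_intCast (q.num * e)

lemma Rat.prime_dvd_den_mul_natCast_iff {p c : ℕ} (hp : p.Prime) {q : ℚ} (hq : Squarefree q.den)
    (hc : c ≠ 0) : p ∣ (q * c).den ↔ p ∣ q.den ∧ ¬ p ∣ c := by
  have := Fact.mk hp
  constructor
  · intro h
    have hden : p ∣ q.den := h.trans (by simpa using Rat.mul_den_dvd q c)
    refine ⟨hden, ?_⟩
    rintro ⟨c', rfl⟩
    obtain ⟨e, he⟩ := hden
    have hpe : ¬ p ∣ e := fun ⟨e', he'⟩ =>
      hp.one_lt.ne' (Nat.isUnit_iff.1 (hq p ⟨e', by rw [he, he', mul_assoc]⟩))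
    have hqc : q * ↑(p * c') = (q.num * c' : ℤ) / (e : ℤ) := by
      have he0 : (e : ℚ) ≠ 0 := by rintro h; simp_all
      have hp0 : (p : ℚ) ≠ 0 := by exact_mod_cast hp.ne_zero
      conv_lhs => rw [← Rat.num_div_den q, he]
      push_cast
      field_simp
    have : ((q * ↑(p * c')).den : ℤ) ∣ e := by
      rw [hqc, ← Rat.divInt_eq_div]; exact Rat.den_dvd _ _
    exact hpe (h.trans (Int.natCast_dvd_natCast.1 this))
  · rintro ⟨hden, hpc⟩
    by_contra h
    have hq : q = q * c * (c : ℚ)⁻¹ := by field_simp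
    have : Rat.padicValuation p q ≤ 1 := by
      rw [hq, map_mul]
      refine mul_le_one' (Rat.padicValuation_le_one_iff.2 h) (Rat.padicValuation_le_one_iff.2 ?_)
      rwa [Rat.inv_natCast_den_of_pos (Nat.pos_of_ne_zero hc)]
    exact Rat.padicValuation_le_one_iff.1 this hden

lemma isIntPoly_natCast_smul_iff (d : ℕ) (f : Polynomial ℚ) :
    IsIntPoly ((d : ℚ) • f) ↔ ∀ i, (f.coeff i).den ∣ d := by
  simp only [IsIntPoly, Polynomial.coeff_smul, smul_eq_mul, Rat.den_natCast_mul_eq_one_iff]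

lemma lcm_den_coeff_dvd_iff (f : Polynomial ℚ) (d : ℕ) :
    f.support.lcm (fun i => (f.coeff i).den) ∣ d ↔ ∀ i, (f.coeff i).den ∣ d := by
  rw [Finset.lcm_dvd_iff]
  refine ⟨fun h i => ?_, fun h i _ => h i⟩
  by_cases hi : i ∈ f.support
  · exact h i hi
  · simp [Polynomial.notMem_support_iff.1 hi]

lemma polyDenom_eq_lcm (f : Polynomial ℚ) :
    polyDenom f = f.support.lcm fun i => (f.coeff i).den := by
  set L := f.support.lcm fun i => (f.coeff i).den
  have hL : 0 < L := Nat.pos_of_ne_zero <| by simp [L, Finset.lcm_eq_zero_iff]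
  have hdvd (d : ℕ) : IsIntPoly ((d : ℚ) • f) ↔ L ∣ d :=
    (isIntPoly_natCast_smul_iff d f).trans (lcm_den_coeff_dvd_iff f d).symm
  exact IsLeast.csInf_eq
    ⟨⟨hL, (hdvd L).2 dvd_rfl⟩, fun d ⟨hd, hfd⟩ => Nat.le_of_dvd hd ((hdvd d).1 hfd)⟩

lemma polyDenom_dvd_iff {f : Polynomial ℚ} {d : ℕ} :
    polyDenom f ∣ d ↔ ∀ i, (f.coeff i).den ∣ d := by
  rw [polyDenom_eq_lcm]
  exact lcm_den_coeff_dvd_iff f d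

lemma prime_dvd_polyDenom_iff {p : ℕ} (hp : p.Prime) {f : Polynomial ℚ} :
    p ∣ polyDenom f ↔ ∃ i, p ∣ (f.coeff i).den := by
  constructor
  · intro h
    rw [polyDenom_eq_lcm] at h
    obtain ⟨i, -, hi⟩ :=
      (Prime.dvd_finsetProd_iff hp.prime _).1 (h.trans (Finset.lcm_dvd_prod _ _))
    exact ⟨i, hi⟩
  · rintro ⟨i, hi⟩
    exact hi.trans (polyDenom_dvd_iff.1 dvd_rfl i)

section DigitSum

variable {p : ℕ}

lemma sd_zero (p : ℕ) : sd p 0 = 0 := by simp [sd]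

lemma sd_of_lt {c : ℕ} (hc : c < p) : sd p c = c := by
  rcases eq_or_ne c 0 with rfl | hc0
  · exact sd_zero p
  · simp [sd, Nat.digits_of_lt p c hc0 hc]

lemma sd_add_mul (hp : 2 ≤ p) {c : ℕ} (hc : c < p) (m : ℕ) :
    sd p (c + p * m) = c + sd p m := by
  by_cases h : c ≠ 0 ∨ m ≠ 0
  · rw [sd, sd, Nat.digits_add p hp c m hc h, List.sum_cons]
  · obtain ⟨rfl, rfl⟩ : c = 0 ∧ m = 0 := by tauto
    simp [sd]

lemma sd_eq_mod_add_sd_div (hp : 2 ≤ p) (n : ℕ) : sd p n = n % p + sd p (n / p) := by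
  conv_lhs => rw [← Nat.mod_add_div n p]
  exact sd_add_mul hp (Nat.mod_lt n (by omega)) _

lemma sd_pos {n : ℕ} (hn : 0 < n) : 0 < sd p n :=
  (Nat.pos_of_ne_zero (Nat.getLast_digit_ne_zero p hn.ne')).trans_le
    (List.le_sum_of_mem (List.getLast_mem _))

lemma sub_one_dvd_iff_dvd_sd (n : ℕ) : p - 1 ∣ n ↔ p - 1 ∣ sd p n := by
  have hdiff : p - 1 ∣ n - sd p n :=
    ⟨_, (Nat.sub_one_mul_sum_log_div_pow_eq_sub_sum_digits n).symm⟩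
  conv_lhs => rw [← Nat.sub_add_cancel (Nat.digit_sum_le p n : sd p n ≤ n)]
  exact Nat.dvd_add_right hdiff

lemma sd_succ_of_not_dvd (hp : 2 ≤ p) {n : ℕ} (h : ¬ p ∣ n + 1) :
    sd p (n + 1) = sd p n + 1 := by
  have hdiv := Nat.mod_add_div n p
  have hmod : n % p + 1 < p := by
    refine lt_of_le_of_ne (Nat.mod_lt n (by omega)) fun heq => h ⟨n / p + 1, ?_⟩
    rw [mul_add, mul_one]
    omega
  rw [show n + 1 = (n % p + 1) + p * (n / p) by omega, sd_add_mul hp hmod,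
    sd_eq_mod_add_sd_div hp n]
  ring

lemma sub_one_le_sd_iff (hp : 2 ≤ p) (n : ℕ) :
    p - 1 ≤ sd p n ↔ p ∣ n + 1 ∨ p ≤ sd p (n + 1) := by
  by_cases hdvd : p ∣ n + 1
  · obtain ⟨k, hk⟩ := hdvd
    have hk0 : k ≠ 0 := by rintro rfl; omega
    have hn : n = (p - 1) + p * (k - 1) := by
      have : p * k = p * (k - 1) + p := by
        rw [← Nat.mul_add_one, Nat.sub_add_cancel (Nat.pos_of_ne_zero hk0)]
      omega
    refine iff_of_true ?_ (Or.inl ⟨k, hk⟩)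
    rw [hn, sd_add_mul hp (by omega)]
    omega
  · rw [sd_succ_of_not_dvd hp hdvd]
    simp only [hdvd, false_or]
    omega

lemma not_dvd_choose_iff (hp : p.Prime) {i n : ℕ} (h : i ≤ n) :
    ¬ p ∣ n.choose i ↔ sd p i + sd p (n - i) ≤ sd p n := by
  have := Fact.mk hp
  have hkummer := sub_one_mul_padicValNat_choose_eq_sub_sum_digits (p := p) h
  have hp1 : 0 < p - 1 := Nat.sub_pos_of_lt hp.one_lt
  calc ¬ p ∣ n.choose i ↔ padicValNat p (n.choose i) = 0 := by
        simp [padicValNat.eq_zero_iff, hp.ne_one, (Nat.choose_pos h).ne']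
    _ ↔ (p - 1) * padicValNat p (n.choose i) = 0 := by simp [hp1.ne']
    _ ↔ _ := by rw [hkummer]; unfold sd; omega

lemma exists_sd_eq_of_le_sd (hp : 2 ≤ p) {t : ℕ} (n : ℕ) (ht : t ≤ sd p n) :
    ∃ i ≤ n, sd p i = t ∧ sd p i + sd p (n - i) = sd p n := by
  induction n using Nat.strong_induction_on generalizing t with
  | _ n ih =>
  rcases Nat.eq_zero_or_pos n with rfl | hn
  · rw [sd_zero] at ht
    exact ⟨0, le_rfl, by rw [sd_zero]; omega, by simp [sd_zero]⟩
  have hdiv := Nat.mod_add_div n p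
  have hmod := Nat.mod_lt n (by omega : 0 < p)
  have hsd := sd_eq_mod_add_sd_div hp n
  rcases le_or_gt t (n % p) with h | h
  · refine ⟨t, by omega, sd_of_lt (by omega), ?_⟩
    rw [show n - t = (n % p - t) + p * (n / p) by omega, sd_add_mul hp (by omega),
      sd_of_lt (by omega)]
    omega
  · obtain ⟨j, hj, hjt, hjsum⟩ :=
      ih (n / p) (Nat.div_lt_self hn hp) (t := t - n % p) (by omega)
    have hpj : p * j ≤ p * (n / p) := Nat.mul_le_mul_left p hj
    refine ⟨n % p + p * j, by omega, by rw [sd_add_mul hp hmod]; omega, ?_⟩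
    rw [show n - (n % p + p * j) = 0 + p * (n / p - j) by rw [Nat.mul_sub]; omega,
      sd_add_mul hp hmod, sd_add_mul hp (by omega)]
    omega

lemma eq_one_or_even_of_sd_eq (hp : p.Prime) {i : ℕ} (hi : sd p i = p - 1) :
    i = 1 ∨ Even i := by
  rcases hp.eq_two_or_odd' with rfl | hodd
  · refine (Nat.even_or_odd i).symm.imp (fun hodd => ?_) id
    have hdiv : sd 2 i = i % 2 + sd 2 (i / 2) := sd_eq_mod_add_sd_div le_rfl i
    have hmod : i % 2 = 1 := Nat.odd_iff.mp hodd
    have hhalf : i / 2 = 0 := by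
      by_contra h
      have := sd_pos (p := 2) (Nat.pos_of_ne_zero h)
      omega
    omega
  · right
    have hdvd : p - 1 ∣ i := (sub_one_dvd_iff_dvd_sd i).2 (hi ▸ dvd_rfl)
    exact even_iff_two_dvd.2 ((Nat.Odd.sub_odd hodd odd_one).two_dvd.trans hdvd)

lemma exists_not_dvd_choose_iff (hp : p.Prime) (n : ℕ) :
    (∃ i ≤ n, (0 < i ∧ (i = 1 ∨ Even i) ∧ p - 1 ∣ i) ∧ ¬ p ∣ n.choose i) ↔
      p - 1 ≤ sd p n := by
  constructor
  · rintro ⟨i, hin, ⟨hi, -, hdvd⟩, hchoose⟩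
    have := (not_dvd_choose_iff hp hin).1 hchoose
    have := Nat.le_of_dvd (sd_pos hi) ((sub_one_dvd_iff_dvd_sd i).1 hdvd)
    omega
  · intro h
    obtain ⟨i, hin, hi, hsum⟩ := exists_sd_eq_of_le_sd hp.two_le n h
    have hpos : 0 < i := Nat.pos_of_ne_zero fun h0 => by
      rw [h0, sd_zero] at hi; have := hp.two_le; omega
    have hdvd : p - 1 ∣ i := (sub_one_dvd_iff_dvd_sd i).2 (hi ▸ dvd_rfl)
    exact ⟨i, hin, ⟨hpos, eq_one_or_even_of_sd_eq hp hi, hdvd⟩,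
      (not_dvd_choose_iff hp hin).2 hsum.le⟩

end DigitSum

lemma den_bernoulli_dvd_prod (m : ℕ) :
    (bernoulli m).den ∣ ∏ q ∈ range (m + 2) with q.Prime ∧ q - 1 ∣ m, q := by
  obtain ⟨k, rfl | rfl⟩ := Nat.even_or_odd' m
  · obtain ⟨T, hT⟩ := Bernoulli.vonStaudt_clausen k
    rw [eq_sub_of_add_eq hT.symm, Rat.intCast_sub_den]
    refine (Rat.den_sum_dvd_prod_den _ _).trans (dvd_of_eq (prod_congr rfl fun q hq => ?_))
    rw [one_div, Rat.inv_natCast_den_of_pos (mem_filter.1 hq).2.1.pos]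
  · rcases eq_or_ne k 0 with rfl | hk
    · norm_num [bernoulli_one]
      refine dvd_prod_of_mem (fun q => q) ?_
      simp [Nat.prime_two]
    · rw [bernoulli_eq_zero_of_odd (odd_two_mul_add_one k) (by omega), Rat.den_zero]
      exact one_dvd _

lemma den_bernoulli_dvd_primorial (m : ℕ) : (bernoulli m).den ∣ primorial (m + 1) :=
  (den_bernoulli_dvd_prod m).trans <| prod_dvd_prod_of_subset _ _ _ fun q hq => by
    simp only [mem_filter] at hq ⊢
    exact ⟨hq.1, hq.2.1⟩

lemma squarefree_den_bernoulli (m : ℕ) : Squarefree (bernoulli m).den :=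
  (squarefree_primorial _).squarefree_of_dvd (den_bernoulli_dvd_primorial m)

lemma prime_dvd_den_bernoulli_of_sub_one_dvd {p k : ℕ} (hp : p.Prime) (hk : 0 < k)
    (h : p - 1 ∣ 2 * k) :
    p ∣ (bernoulli (2 * k)).den := by
  have := Fact.mk hp
  set S := (range (2 * k + 2)).filter fun q => q.Prime ∧ q - 1 ∣ 2 * k
  obtain ⟨T, hT⟩ := Bernoulli.vonStaudt_clausen k
  have hpS : p ∈ S :=
    mem_filter.2 ⟨mem_range.2 (by have := Nat.le_of_dvd (by omega) h; omega), hp, h⟩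
  have hrest : Rat.padicValuation p (∑ q ∈ S.erase p, (1 : ℚ) / q) ≤ 1 := by
    refine Valuation.map_sum_le _ fun q hq => Rat.padicValuation_le_one_iff.2 ?_
    obtain ⟨hqp, hqS⟩ := mem_erase.1 hq
    have hq := (mem_filter.1 hqS).2.1
    rw [one_div, Rat.inv_natCast_den_of_pos hq.pos]
    exact fun hdvd => hqp ((Nat.prime_dvd_prime_iff_eq hp hq).1 hdvd).symm
  have hinv : (1 : ℚ) / p = T - bernoulli (2 * k) - ∑ q ∈ S.erase p, (1 : ℚ) / q := by
    rw [hT, ← add_sum_erase S _ hpS]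
    ring
  -- were `B_{2k}` `p`-integral, so would be `1 / p`
  by_contra hB
  have hpint : Rat.padicValuation p ((1 : ℚ) / p) ≤ 1 := hinv ▸
    Valuation.map_sub_le _ (Valuation.map_sub_le _ (Int.padicValuation_le_one p T)
      (Rat.padicValuation_le_one_iff.2 hB)) hrest
  rw [Rat.padicValuation_le_one_iff, one_div, Rat.inv_natCast_den_of_pos hp.pos] at hpint
  exact hpint dvd_rfl

lemma prime_dvd_den_bernoulli_iff {p m : ℕ} (hp : p.Prime) :
    p ∣ (bernoulli m).den ↔ 0 < m ∧ (m = 1 ∨ Even m) ∧ p - 1 ∣ m := by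
  constructor
  · intro h
    obtain ⟨q, hq, hpq⟩ :=
      (Prime.dvd_finsetProd_iff hp.prime _).1 (h.trans (den_bernoulli_dvd_prod m))
    obtain ⟨hqm, hq, hdvd⟩ := mem_filter.1 hq
    obtain rfl := (Nat.prime_dvd_prime_iff_eq hp hq).1 hpq
    have hm : 0 < m := by
      have := mem_range.1 hqm
      have := hp.two_le
      omega
    refine ⟨hm, ?_, hdvd⟩
    by_contra hodd
    push Not at hodd
    rw [bernoulli_eq_zero_of_odd (Nat.not_even_iff_odd.1 hodd.2) (by omega), Rat.den_zero] at h
    exact hp.one_lt.ne' (Nat.dvd_one.1 h)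
  · rintro ⟨hm, rfl | ⟨k, rfl⟩, hdvd⟩
    · obtain rfl : p = 2 := by have := Nat.le_of_dvd one_pos hdvd; have := hp.two_le; omega
      norm_num [bernoulli_one]
    · rw [← two_mul] at hdvd ⊢
      exact prime_dvd_den_bernoulli_of_sub_one_dvd hp (by omega) hdvd

lemma DB_dvd_primorial (n : ℕ) : DB n ∣ primorial (n + 1) := by
  refine polyDenom_dvd_iff.2 fun i => ?_
  rw [Polynomial.coeff_bernoulli]
  split_ifs with hi
  · exact (Rat.mul_den_dvd _ _).trans <| by
      simpa using (den_bernoulli_dvd_primorial (n - i)).trans (primorial_dvd_primorial (by omega))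
  · simp

lemma squarefree_DB (n : ℕ) : Squarefree (DB n) :=
  (squarefree_primorial _).squarefree_of_dvd (DB_dvd_primorial n)

lemma prime_dvd_DB_iff {p : ℕ} (hp : p.Prime) (n : ℕ) : p ∣ DB n ↔ p - 1 ≤ sd p n := by
  rw [DB, prime_dvd_polyDenom_iff hp, ← exists_not_dvd_choose_iff hp]
  have hcoeff : ∀ i ≤ n, p ∣ ((Polynomial.bernoulli n).coeff (n - i)).den ↔
      (0 < i ∧ (i = 1 ∨ Even i) ∧ p - 1 ∣ i) ∧ ¬ p ∣ n.choose i := fun i hi => by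
    rw [Polynomial.coeff_bernoulli, if_pos (Nat.sub_le n i), Nat.sub_sub_self hi,
      Nat.choose_symm hi, Rat.prime_dvd_den_mul_natCast_iff hp (squarefree_den_bernoulli i)
        (Nat.choose_pos hi).ne', prime_dvd_den_bernoulli_iff hp]
  constructor
  · rintro ⟨j, hj⟩
    have hjn : j ≤ n := by
      by_contra hjn
      rw [Polynomial.coeff_bernoulli, if_neg hjn, Rat.den_zero] at hj
      exact hp.one_lt.ne' (Nat.dvd_one.1 hj)
    exact ⟨n - j, Nat.sub_le n j, (hcoeff _ (Nat.sub_le n j)).1 (by rwa [Nat.sub_sub_self hjn])⟩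
  · rintro ⟨i, hi, h⟩
    exact ⟨n - i, (hcoeff i hi).2 h⟩

lemma Dhat_mul_Dtilde_mul_Dcheck (m : ℕ) :
    Dhat m * Dtilde m * Dcheck m =
      ∏ p ∈ range (m + 1) with p.Prime ∧ (p ∣ m ∨ p ≤ sd p m), p := by
  simp only [Dhat, Dtilde, Dcheck, prod_filter, ← prod_mul_distrib]
  refine prod_congr rfl fun p _ => ?_
  by_cases hp : p.Prime <;> by_cases hdvd : p ∣ m <;> by_cases hle : p ≤ sd p m <;>
    simp [hp, hdvd, hle]

theorem stmt_2_general (n : ℕ) :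
    DB n = Dhat (n + 1) * Dtilde (n + 1) * Dcheck (n + 1) := by
  rw [Dhat_mul_Dtilde_mul_Dcheck, ← Nat.prod_primeFactors_of_squarefree (squarefree_DB n)]
  congr 1
  ext p
  simp only [Nat.mem_primeFactors, mem_filter, mem_range]
  constructor
  · rintro ⟨hp, hdvd, -⟩
    have hle : p ≤ n + 1 := hp.dvd_primorial_iff.1 (hdvd.trans (DB_dvd_primorial n))
    exact ⟨by omega, hp, (sub_one_le_sd_iff hp.two_le n).1 ((prime_dvd_DB_iff hp n).1 hdvd)⟩
  · rintro ⟨-, hp, h⟩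
    exact ⟨hp, (prime_dvd_DB_iff hp n).2 ((sub_one_le_sd_iff hp.two_le n).2 h),
      (squarefree_DB n).ne_zero⟩

/-- For `n ≥ 1`, `DB n = D̂_{n+1} · D̃_{n+1} · Ď_{n+1}`. -/
theorem stmt_2 (n : ℕ) (hn : 1 ≤ n) :
    DB n = Dhat (n + 1) * Dtilde (n + 1) * Dcheck (n + 1) :=
  stmt_2_general n
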